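/- Let X : ℝ → ℝ² be a twice continuously differentiable curve with ‖X'(s)‖ = 1 for all s, let a < b and ρ > 0, and suppose that the normal map Φ(s,t) = X(s) + t·R(X'(s)) is injective on [a,b] × [−ρ, ρ] and that ρ·‖X''(s)‖ ≤ 1 for all s ∈ [a,b]. Then the two-dimensional Lebesgue measure of the tubular section Φ([a,b] × [−ρ, ρ]) equals 2ρ·(b − a), i.e. the width of the tube times the arc length of the curve segment. (The identity |S| = r·|Γ_s| for the tubular section, used in the proof of Lemma B.1 of the paper.) -/

import Mathlib

/-!
The normal map `Φ(s, t) = X s + t • R (X' s)` has Jacobian determinant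
`⟪X' + t R X'', X'⟫ = 1 + t κ(s)` with `κ = ⟪R X'', X'⟫`, and `|κ| ≤ ‖X''‖`, so the bound
`ρ ‖X''‖ ≤ 1` makes it nonnegative on `[a, b] × [-ρ, ρ]`. Since `Φ` is injective there, the
change of variables formula gives `|Φ([a, b] × [-ρ, ρ])| = ∫_a^b ∫_{-ρ}^{ρ} (1 + t κ(s)) dt ds`,
and the term linear in `t` integrates to zero over the symmetric interval.
-/

open MeasureTheory

/-- Rotation by 90 degrees in the Euclidean plane: `R(a₁, a₂) = (-a₂, a₁)`. -/
noncomputable def rot (a : EuclideanSpace ℝ (Fin 2)) : EuclideanSpace ℝ (Fin 2) :=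
  (WithLp.equiv 2 (Fin 2 → ℝ)).symm ![-a 1, a 0]

open Set ContinuousLinearMap

local notation "𝔼²" => EuclideanSpace ℝ (Fin 2)

section ChangeOfVariables

variable {E F : Type*} [NormedAddCommGroup E] [NormedSpace ℝ E] [MeasurableSpace E]
  [BorelSpace E] [NormedAddCommGroup F] [NormedSpace ℝ F] [MeasurableSpace F] [BorelSpace F]
  [FiniteDimensional ℝ F] {μ : Measure E} {ν : Measure F} [ν.IsAddHaarMeasure]

theorem ContinuousLinearEquiv.measure_image_eq_lintegral_abs_det (e : E ≃L[ℝ] F)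
    (he : MeasurePreserving e μ ν) {f : F → E} {f' : F → F →L[ℝ] E} {s : Set F}
    (hs : MeasurableSet s) (hf' : ∀ x ∈ s, HasFDerivWithinAt f (f' x) s x) (hf : InjOn f s) :
    μ (f '' s) = ∫⁻ x in s, ENNReal.ofReal |((e : E →L[ℝ] F).comp (f' x)).det| ∂ν := by
  rw [lintegral_abs_det_fderiv_eq_addHaar_image ν hs
    (fun x hx => (e : E →L[ℝ] F).hasFDerivAt.comp_hasFDerivWithinAt x (hf' x hx))
    (e.injective.comp_injOn hf), image_comp, ContinuousLinearEquiv.coe_coe,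
    ← he.measure_preimage_emb e.toHomeomorph.measurableEmbedding, e.injective.preimage_image]

end ChangeOfVariables

noncomputable def EuclideanSpace.finTwoEquivProd : 𝔼² ≃L[ℝ] ℝ × ℝ :=
  (PiLp.continuousLinearEquiv 2 ℝ (fun _ : Fin 2 => ℝ)).trans
    (ContinuousLinearEquiv.finTwoArrow ℝ ℝ)

lemma EuclideanSpace.finTwoEquivProd_apply (x : 𝔼²) : finTwoEquivProd x = (x 0, x 1) := rfl

lemma EuclideanSpace.measurePreserving_finTwoEquivProd : MeasurePreserving finTwoEquivProd :=
  (volume_preserving_finTwoArrow ℝ).comp (PiLp.volume_preserving_ofLp (Fin 2))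

lemma rot_apply_zero (a : 𝔼²) : rot a 0 = -a 1 := rfl

lemma rot_apply_one (a : 𝔼²) : rot a 1 = a 0 := rfl

noncomputable def rotCLM : 𝔼² →L[ℝ] 𝔼² :=
  LinearMap.toContinuousLinearMap
    { toFun := rot
      map_add' := fun x y => by ext i; fin_cases i <;> simp [rot]; ring
      map_smul' := fun c x => by ext i; fin_cases i <;> simp [rot] }

lemma norm_rot (a : 𝔼²) : ‖rot a‖ = ‖a‖ := by
  simp [EuclideanSpace.norm_eq, Fin.sum_univ_two, rot_apply_zero, rot_apply_one, add_comm]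

lemma det_finTwoEquivProd_comp_smulRight_add_smulRight_rot (u w : 𝔼²) :
    ((EuclideanSpace.finTwoEquivProd : 𝔼² →L[ℝ] ℝ × ℝ).comp
      ((fst ℝ ℝ ℝ).smulRight u + (snd ℝ ℝ ℝ).smulRight (rot w))).det = inner ℝ u w := by
  rw [ContinuousLinearMap.det, ← LinearMap.det_toMatrix (Module.Basis.finTwoProd ℝ),
    Matrix.det_fin_two]
  simp [LinearMap.toMatrix_apply, EuclideanSpace.finTwoEquivProd_apply, rot_apply_zero,
    rot_apply_one, PiLp.inner_apply, Fin.sum_univ_two]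
  ring

lemma one_add_mul_inner_rot_nonneg {v w : 𝔼²} {t ρ : ℝ} (hw : ‖w‖ = 1) (ht : |t| ≤ ρ)
    (hρv : ρ * ‖v‖ ≤ 1) : 0 ≤ 1 + t * inner ℝ (rot v) w := by
  have hinner : |inner ℝ (rot v) w| ≤ ‖v‖ := by
    simpa [norm_rot, hw] using abs_real_inner_le_norm (rot v) w
  have hprod : |t * inner ℝ (rot v) w| ≤ 1 := by
    rw [abs_mul]
    calc |t| * |inner ℝ (rot v) w| ≤ ρ * ‖v‖ :=
          mul_le_mul ht hinner (abs_nonneg _) ((abs_nonneg t).trans ht)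
      _ ≤ 1 := hρv
  linarith [neg_abs_le (t * inner ℝ (rot v) w)]

theorem hasFDerivAt_normalMap {X : ℝ → 𝔼²} {s : ℝ} (hX : DifferentiableAt ℝ X s)
    (hX' : DifferentiableAt ℝ (deriv X) s) (t : ℝ) :
    HasFDerivAt (fun p : ℝ × ℝ => X p.1 + p.2 • rot (deriv X p.1))
      ((fst ℝ ℝ ℝ).smulRight (deriv X s + t • rot (deriv (deriv X) s)) +
        (snd ℝ ℝ ℝ).smulRight (rot (deriv X s))) (s, t) := by
  have hR : HasDerivAt (fun u => rot (deriv X u)) (rot (deriv (deriv X) s)) s :=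
    rotCLM.hasFDerivAt.comp_hasDerivAt s hX'.hasDerivAt
  have hfst : HasFDerivAt Prod.fst (fst ℝ ℝ ℝ) (s, t) := hasFDerivAt_fst
  refine ((hX.hasDerivAt.hasFDerivAt.comp (s, t) hfst).add
    (hasFDerivAt_snd.smul (hR.hasFDerivAt.comp (s, t) hfst))).congr_fderiv ?_
  ext p <;> simp [smul_smul, mul_comm]

lemma lintegral_Icc_neg_ofReal_one_add_mul {ρ c : ℝ} (hρ : 0 ≤ ρ)
    (hpos : ∀ t ∈ Icc (-ρ) ρ, 0 ≤ 1 + t * c) :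
    ∫⁻ t in Icc (-ρ) ρ, ENNReal.ofReal (1 + t * c) = ENNReal.ofReal (2 * ρ) := by
  rw [← ofReal_integral_eq_lintegral_ofReal
      (by fun_prop : Continuous fun t => 1 + t * c).integrableOn_Icc
      ((ae_restrict_iff' measurableSet_Icc).2 (ae_of_all _ hpos)),
    integral_Icc_eq_integral_Ioc, ← intervalIntegral.integral_of_le (by linarith),
    intervalIntegral.integral_add intervalIntegrable_const
      (intervalIntegral.intervalIntegrable_id.mul_const c),
    intervalIntegral.integral_const, intervalIntegral.integral_mul_const, integral_id]
  congr 1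
  simp
  ring

lemma lintegral_Icc_prod_Icc_neg_ofReal_one_add_mul {κ : ℝ → ℝ} (hκ : Measurable κ)
    {a b ρ : ℝ} (hρ : 0 ≤ ρ) (hpos : ∀ s ∈ Icc a b, ∀ t ∈ Icc (-ρ) ρ, 0 ≤ 1 + t * κ s) :
    ∫⁻ p in Icc a b ×ˢ Icc (-ρ) ρ, ENNReal.ofReal (1 + p.2 * κ p.1) =
      ENNReal.ofReal (2 * ρ * (b - a)) := by
  rw [Measure.volume_eq_prod, ← Measure.prod_restrict, lintegral_prod _ (by fun_prop),
    setLIntegral_congr_fun measurableSet_Icc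
      (fun s hs => lintegral_Icc_neg_ofReal_one_add_mul hρ (hpos s hs)),
    setLIntegral_const, Real.volume_Icc, ← ENNReal.ofReal_mul (by positivity)]

theorem stmt11_general (X : ℝ → EuclideanSpace ℝ (Fin 2))
    (hX : ContDiff ℝ 2 X) (hunit : ∀ s : ℝ, ‖deriv X s‖ = 1)
    (a b ρ : ℝ) (hρ : 0 < ρ)
    (hinj : Set.InjOn (fun p : ℝ × ℝ => X p.1 + p.2 • rot (deriv X p.1))
      (Set.Icc a b ×ˢ Set.Icc (-ρ) ρ))
    (hcurv : ∀ s ∈ Set.Icc a b, ρ * ‖deriv (deriv X) s‖ ≤ 1) :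
    volume ((fun p : ℝ × ℝ => X p.1 + p.2 • rot (deriv X p.1)) ''
        (Set.Icc a b ×ˢ Set.Icc (-ρ) ρ)) =
      ENNReal.ofReal (2 * ρ * (b - a)) := by
  have hX₁ : Differentiable ℝ X := hX.differentiable (by norm_num)
  have hX₂ : Differentiable ℝ (deriv X) := (hX.deriv' (n := 1)).differentiable one_ne_zero
  set κ : ℝ → ℝ := fun s => inner ℝ (rot (deriv (deriv X) s)) (deriv X s)
  have hκ : Measurable κ :=
    (rotCLM.continuous.measurable.comp (measurable_deriv _)).inner (measurable_deriv X)
  have hjac : ∀ s t, inner ℝ (deriv X s + t • rot (deriv (deriv X) s)) (deriv X s) =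
      1 + t * κ s := fun s t => by
    rw [inner_add_left, real_inner_self_eq_norm_sq, hunit, real_inner_smul_left, one_pow]
  have hpos : ∀ s ∈ Icc a b, ∀ t ∈ Icc (-ρ) ρ, 0 ≤ 1 + t * κ s := fun s hs t ht =>
    one_add_mul_inner_rot_nonneg (hunit s) (abs_le.2 ht) (hcurv s hs)
  have hmeas : MeasurableSet (Icc a b ×ˢ Icc (-ρ) ρ) := measurableSet_Icc.prod measurableSet_Icc
  rw [EuclideanSpace.finTwoEquivProd.measure_image_eq_lintegral_abs_det
      EuclideanSpace.measurePreserving_finTwoEquivProd hmeas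
      (fun p _ => (hasFDerivAt_normalMap (hX₁ p.1) (hX₂ p.1) p.2).hasFDerivWithinAt) hinj,
    setLIntegral_congr_fun hmeas fun p hp => by
      rw [det_finTwoEquivProd_comp_smulRight_add_smulRight_rot, hjac,
        abs_of_nonneg (hpos _ hp.1 _ hp.2)]]
  exact lintegral_Icc_prod_Icc_neg_ofReal_one_add_mul hκ hρ.le hpos

/-- The identity `|S| = r·|Γ_s|` for a tubular section (proof of Lemma B.1 of
the paper): if the normal map of a unit-speed `C²` curve is injective on
`[a,b] × [-ρ,ρ]` and `ρ·‖X''‖ ≤ 1` on `[a,b]`, then the area of the tubular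
section equals `2ρ·(b-a)`. -/
theorem stmt11 (X : ℝ → EuclideanSpace ℝ (Fin 2))
    (hX : ContDiff ℝ 2 X) (hunit : ∀ s : ℝ, ‖deriv X s‖ = 1)
    (a b ρ : ℝ) (hab : a < b) (hρ : 0 < ρ)
    (hinj : Set.InjOn (fun p : ℝ × ℝ => X p.1 + p.2 • rot (deriv X p.1))
      (Set.Icc a b ×ˢ Set.Icc (-ρ) ρ))
    (hcurv : ∀ s ∈ Set.Icc a b, ρ * ‖deriv (deriv X) s‖ ≤ 1) :
    volume ((fun p : ℝ × ℝ => X p.1 + p.2 • rot (deriv X p.1)) ''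
        (Set.Icc a b ×ˢ Set.Icc (-ρ) ρ)) =
      ENNReal.ofReal (2 * ρ * (b - a)) :=
  stmt11_general X hX hunit a b ρ hρ hinj hcurv
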